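/- A countable family K = (A_i)_{i∈I} of pairwise nonisomorphic structures is PL-learnable if and only if for all i ≠ j in I the two-element subfamily {A_i, A_j} is Ex-learnable. (This is the paper's characterization of PL-learnability by Σ^inf_2-antichains, using that a pair of structures forms a Σ^inf_2-antichain exactly when it is Ex-learnable.) -/

import Mathlib

/-- A structure on domain ℕ: a binary relation given as a map to `Bool`. -/
abbrev Struc := ℕ → ℕ → Bool

/-- The restrictions of `R` and `R'` to `{0,…,s} × {0,…,s}` agree. -/
def restrEq (R R' : Struc) (s : ℕ) : Prop :=
  ∀ x ≤ s, ∀ y ≤ s, R x y = R' x y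

/-- `R` and `R'` are isomorphic structures. -/
def Isom (R R' : Struc) : Prop :=
  ∃ e : ℕ ≃ ℕ, ∀ x y, R' (e x) (e y) = R x y

/-- `R↾s` embeds into `R'`: there is a map injective on `{0,…,s}` preserving the relation. -/
def EmbedsRestr (R : Struc) (s : ℕ) (R' : Struc) : Prop :=
  ∃ h : ℕ → ℕ, (∀ x ≤ s, ∀ y ≤ s, h x = h y → x = y) ∧
    (∀ x ≤ s, ∀ y ≤ s, R' (h x) (h y) = R x y)

/-- The learning domain of a family: all isomorphic copies of members of the family. -/
def LD {I : Type} (A : I → Struc) : Set Struc := {R | ∃ i, Isom R (A i)}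

/-- A learner: its conjecture at stage `s` depends only on `R↾s`. -/
def IsLearner {I : Type} (M : Struc → ℕ → Option I) : Prop :=
  ∀ R R' s, restrEq R R' s → M R s = M R' s

/-- `M` Ex-learns the family `A`. -/
def ExLearns {I : Type} (A : I → Struc) (M : Struc → ℕ → Option I) : Prop :=
  ∀ R i, Isom R (A i) → ∃ s₀, ∀ s ≥ s₀, M R s = some i

/-- `M` Fin-learns the family `A`. -/
def FinLearns {I : Type} (A : I → Struc) (M : Struc → ℕ → Option I) : Prop :=
  ∀ R i, Isom R (A i) →
    ∃ s₀, (∀ s < s₀, M R s = none) ∧ (∀ s ≥ s₀, M R s = some i)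

/-- `M` co-learns the family `A`. -/
def CoLearns {I : Type} (A : I → Struc) (M : Struc → ℕ → Option I) : Prop :=
  ∀ R i, Isom R (A i) → ∀ j, (∃ s, M R s = some j) ↔ j ≠ i

/-- `M` nUs-learns the family `A`: it Ex-learns it and never abandons the correct conjecture. -/
def NUsLearns {I : Type} (A : I → Struc) (M : Struc → ℕ → Option I) : Prop :=
  ExLearns A M ∧
    ∀ R i, Isom R (A i) → ∀ s, M R s = some i → ∀ t ≥ s, M R t = some i

/-- `M` Dec-learns the family `A`: it Ex-learns it and never repeats an abandoned conjecture. -/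
def DecLearns {I : Type} (A : I → Struc) (M : Struc → ℕ → Option I) : Prop :=
  ExLearns A M ∧
    ∀ R ∈ LD A, ∀ (j : I) (s : ℕ), M R s = some j → M R (s + 1) ≠ some j →
      ∀ t > s, M R t ≠ some j

/-- `M` PL-learns the family `A`: the unique conjecture output infinitely often is correct. -/
def PLLearns {I : Type} (A : I → Struc) (M : Struc → ℕ → Option I) : Prop :=
  ∀ R ∈ LD A, ∀ i, {s | M R s = some i}.Infinite ↔ Isom R (A i)

/-- The relation `E₀` on Baire space: eventual agreement. -/
def E0 (p q : ℕ → ℕ) : Prop := ∃ m, ∀ n ≥ m, p n = q n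

/-- The relation `E₃` on `ℕ → (ℕ → ℕ)`: columnwise `E₀`. -/
def E3 (p q : ℕ → ℕ → ℕ) : Prop := ∀ m, E0 (p m) (q m)

/-- The relation `E_range` on Baire space: equality of ranges. -/
def Erange (p q : ℕ → ℕ) : Prop := Set.range p = Set.range q

/-!
A PL-learner `M` yields a learner for a pair `{A i, A j}`: guess `A i` as long as `M` has so far
conjectured `i` more often than `j`. On a copy of `A i`, `M` conjectures `i` infinitely often and
`j` only finitely often, so this guess stabilises correctly.

Conversely, on a copy of `A k` the pair learners provide a relation "`a` beats `b` at stage `s`"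
such that eventually `k` beats every `j ≠ k` and no `j ≠ k` beats `k`. Enumerate `I` as
`f 0, f 1, …` and at stage `⟨n, t⟩` conjecture `f n` if it beats every `f m` with `m ≤ c`, where
`c` counts the earlier conjectures of `f n`. A wrong index conjectured infinitely often would have
to beat `k` at arbitrarily late stages. If `k` were conjectured only `C` times, it would pass the
test at every late stage `⟨n, t⟩` with `f n = k`.
-/

open Filter

theorem Isom.symm {R R' : Struc} (h : Isom R R') : Isom R' R := by
  obtain ⟨e, he⟩ := h
  exact ⟨e.symm, fun x y => by simpa using (he (e.symm x) (e.symm y)).symm⟩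

theorem Isom.trans {R R' R'' : Struc} (h : Isom R R') (h' : Isom R' R'') : Isom R R'' := by
  obtain ⟨e, he⟩ := h
  obtain ⟨e', he'⟩ := h'
  exact ⟨e.trans e', fun x y => by rw [Equiv.trans_apply, Equiv.trans_apply, he', he]⟩

theorem restrEq.mono {R R' : Struc} {s t : ℕ} (h : restrEq R R' s) (hts : t ≤ s) :
    restrEq R R' t :=
  fun x hx y hy => h x (hx.trans hts) y (hy.trans hts)

theorem ExLearns.eventually {I : Type} {A : I → Struc} {M : Struc → ℕ → Option I}
    (hM : ExLearns A M) {R : Struc} {i : I} (hR : Isom R (A i)) :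
    ∀ᶠ s in atTop, M R s = some i :=
  eventually_atTop.2 (hM R i hR)

section PLLearns

variable {I : Type} {A : I → Struc} {M : Struc → ℕ → Option I}

theorem PLLearns.infinite (hM : PLLearns A M) {R : Struc} {i : I} (hR : Isom R (A i)) :
    {s | M R s = some i}.Infinite :=
  (hM R ⟨i, hR⟩ i).2 hR

theorem PLLearns.finite_of_ne (hM : PLLearns A M) (hA : ∀ i j, i ≠ j → ¬ Isom (A i) (A j))
    {R : Struc} {i j : I} (hR : Isom R (A i)) (hji : j ≠ i) :
    {s | M R s = some j}.Finite :=
  Set.not_infinite.1 fun h => hA i j hji.symm (hR.symm.trans ((hM R ⟨i, hR⟩ j).1 h))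

end PLLearns

namespace Nat

theorem count_eq_count_of_forall_lt {p q : ℕ → Prop} [DecidablePred p] [DecidablePred q] {n : ℕ}
    (h : ∀ k < n, p k ↔ q k) : count p n = count q n :=
  le_antisymm (count_mono_left fun k hk => (h k hk).1) (count_mono_left fun k hk => (h k hk).2)

theorem eventually_count_lt_count {p q : ℕ → Prop} [DecidablePred p] [DecidablePred q]
    (hp : {n | p n}.Infinite) (hq : {n | q n}.Finite) :
    ∀ᶠ n in atTop, count q n < count p n := by
  have hp_tendsto : Tendsto (count p) atTop atTop :=
    tendsto_atTop_atTop_of_monotone (count_monotone p) fun b =>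
      (surjective_count_of_infinite_setOfPred hp b).imp fun _ h => h.ge
  exact (hp_tendsto.eventually_gt_atTop hq.toFinset.card).mono fun n hn =>
    (count_le_card hq n).trans_lt hn

end Nat

open Classical in
noncomputable def pairLearner {I : Type} (M : Struc → ℕ → Option I) (i j : I) :
    Struc → ℕ → Option (Fin 2) := fun R s =>
  if Nat.count (fun t => M R t = some j) s < Nat.count (fun t => M R t = some i) s then some 0
  else some 1

theorem IsLearner.pairLearner {I : Type} {M : Struc → ℕ → Option I} (hM : IsLearner M)
    (i j : I) : IsLearner (pairLearner M i j) := by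
  intro R R' s hRR'
  classical
  have hM_eq : ∀ t < s, M R t = M R' t := fun t ht => hM R R' t (hRR'.mono ht.le)
  have hcount : ∀ a, Nat.count (fun t => M R t = some a) s = Nat.count (fun t => M R' t = some a) s :=
    fun a => Nat.count_eq_count_of_forall_lt fun t ht => by rw [hM_eq t ht]
  simp only [_root_.pairLearner, hcount]

theorem PLLearns.exLearns_pairLearner {I : Type} {A : I → Struc} {M : Struc → ℕ → Option I}
    (hM : PLLearns A M) (hA : ∀ i j, i ≠ j → ¬ Isom (A i) (A j)) {i j : I} (hij : i ≠ j) :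
    ExLearns (fun t : Fin 2 => if t = 0 then A i else A j) (pairLearner M i j) := by
  classical
  have more_often : ∀ {R : Struc} {a b : I}, Isom R (A a) → b ≠ a →
      ∀ᶠ s in atTop, Nat.count (fun t => M R t = some b) s < Nat.count (fun t => M R t = some a) s :=
    fun hR hba => Nat.eventually_count_lt_count (hM.infinite hR) (hM.finite_of_ne hA hR hba)
  intro R t hR
  rw [← eventually_atTop]
  fin_cases t
  · exact (more_often (by simpa using hR) hij.symm).mono fun s hs => if_pos hs
  · exact (more_often (by simpa using hR) hij).mono fun s hs => if_neg hs.not_gt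

section VetoLearner

variable {I : Type} (f : ℕ → I) (beats : ℕ → I → I → Prop)

open Classical in
noncomputable def vetoStep (n : ℕ) (beatsNow : I → I → Prop) (c : I → ℕ) : Option I :=
  if ∀ m ≤ c (f n), f m ≠ f n → beatsNow (f n) (f m) then some (f n) else none

open Classical in
noncomputable def vetoCounts : ℕ → I → ℕ
  | 0 => fun _ => 0
  | s + 1 => fun j =>
      vetoCounts s j + if vetoStep f s.unpair.1 (beats s) (vetoCounts s) = some j then 1 else 0

noncomputable def vetoLearner (s : ℕ) : Option I :=
  vetoStep f s.unpair.1 (beats s) (vetoCounts f beats s)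

open Classical in
theorem vetoCounts_eq_count (s : ℕ) (j : I) :
    vetoCounts f beats s j = Nat.count (fun t => vetoLearner f beats t = some j) s := by
  induction s with
  | zero => simp [vetoCounts]
  | succ s ih => rw [Nat.count_succ, ← ih]; rfl

open Classical in
theorem vetoLearner_eq_some_iff {s : ℕ} {j : I} :
    vetoLearner f beats s = some j ↔ f s.unpair.1 = j ∧
      ∀ m ≤ Nat.count (fun t => vetoLearner f beats t = some j) s, f m ≠ j → beats s j (f m) := by
  rw [vetoLearner, vetoStep]
  split_ifs with h
  · simp only [Option.some.injEq]
    constructor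
    · rintro rfl
      simpa [vetoCounts_eq_count] using h
    · exact And.left
  · simp only [false_iff, not_and]
    rintro rfl hbeats
    exact h (by simpa [vetoCounts_eq_count] using hbeats)

variable {f beats}

theorem vetoLearner_congr {beats' : ℕ → I → I → Prop} {s : ℕ}
    (h : ∀ t ≤ s, beats t = beats' t) : vetoLearner f beats s = vetoLearner f beats' s := by
  have hcounts : ∀ t ≤ s, vetoCounts f beats t = vetoCounts f beats' t := by
    intro t ht
    induction t with
    | zero => rfl
    | succ t ih => rw [vetoCounts, vetoCounts, ih (by omega), h t (by omega)]
  rw [vetoLearner, vetoLearner, hcounts s le_rfl, h s le_rfl]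

theorem finite_vetoLearner_eq_some {j k : I} {mk : ℕ} (hk : f mk = k) (hjk : j ≠ k)
    (hlose : ∀ᶠ s in atTop, ¬ beats s j k) : {s | vetoLearner f beats s = some j}.Finite := by
  classical
  by_contra hinf
  obtain ⟨S, hS⟩ := eventually_atTop.1 hlose
  set n := max mk S
  set s := Nat.nth (fun t => vetoLearner f beats t = some j) n
  have hs : vetoLearner f beats s = some j := Nat.nth_mem_of_infinite hinf n
  have hcount : Nat.count (fun t => vetoLearner f beats t = some j) s = n :=
    Nat.count_nth_of_infinite hinf n
  have hSs : S ≤ s := (le_max_right mk S).trans ((Nat.nth_strictMono hinf).id_le n)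
  have hbeats := ((vetoLearner_eq_some_iff f beats).1 hs).2 mk (by omega) (by rwa [hk, ne_comm])
  exact hS s hSs (hk ▸ hbeats)

theorem infinite_vetoLearner_eq_some {k : I} {mk : ℕ} (hk : f mk = k)
    (hwin : ∀ j ≠ k, ∀ᶠ s in atTop, beats s k j) :
    {s | vetoLearner f beats s = some k}.Infinite := by
  classical
  intro hfin
  set C := hfin.toFinset.card
  have hev : ∀ᶠ s in atTop, ∀ m ∈ Set.Iic C, f m ≠ k → beats s k (f m) := by
    refine (eventually_all_finite (Set.finite_Iic C)).2 fun m _ => ?_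
    by_cases hm : f m = k
    · exact Eventually.of_forall fun _ h => absurd hm h
    · exact (hwin (f m) hm).mono fun _ h _ => h
  obtain ⟨S, hS⟩ := eventually_atTop.1 hev
  obtain ⟨T, hT⟩ := hfin.bddAbove
  set s := Nat.pair mk (max S (T + 1))
  have hs_ge : max S (T + 1) ≤ s := Nat.right_le_pair _ _
  have hs : vetoLearner f beats s = some k := by
    refine (vetoLearner_eq_some_iff f beats).2 ⟨by simp [s, hk], fun m hm hne => ?_⟩
    exact hS s (le_of_max_le_left hs_ge) m (hm.trans (Nat.count_le_card hfin s)) hne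
  have := hT hs
  omega

theorem infinite_vetoLearner_eq_some_iff (hf : Function.Surjective f) {k : I}
    (hwin : ∀ j ≠ k, ∀ᶠ s in atTop, beats s k j)
    (hlose : ∀ j ≠ k, ∀ᶠ s in atTop, ¬ beats s j k) (j : I) :
    {s | vetoLearner f beats s = some j}.Infinite ↔ j = k := by
  obtain ⟨mk, hk⟩ := hf k
  refine ⟨fun h => ?_, ?_⟩
  · by_contra hjk
    exact h (finite_vetoLearner_eq_some hk hjk (hlose j hjk))
  · rintro rfl
    exact infinite_vetoLearner_eq_some hk hwin

end VetoLearner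

theorem exists_plLearns_of_pairs {I : Type} [Countable I] {A : I → Struc}
    (hA : ∀ i j, i ≠ j → ¬ Isom (A i) (A j))
    (hpairs : ∀ i j, i ≠ j → ∃ M : Struc → ℕ → Option (Fin 2), IsLearner M ∧
      ExLearns (fun t : Fin 2 => if t = 0 then A i else A j) M) :
    ∃ M : Struc → ℕ → Option I, IsLearner M ∧ PLLearns A M := by
  rcases isEmpty_or_nonempty I with hI | hI
  · exact ⟨fun _ _ => none, fun _ _ _ _ => rfl, fun _ ⟨i, _⟩ => isEmptyElim i⟩
  obtain ⟨f, hf⟩ := exists_surjective_nat I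
  choose N hN_learner hN_ex using hpairs
  let beats : Struc → ℕ → I → I → Prop := fun R s a b => ∃ hab : a ≠ b, N a b hab R s = some 0
  refine ⟨fun R => vetoLearner f (beats R), fun R R' s hRR' => vetoLearner_congr fun t ht => ?_, ?_⟩
  · funext a b
    exact propext <| exists_congr fun hab => by rw [hN_learner a b hab R R' t (hRR'.mono ht)]
  rintro R ⟨k, hk⟩ j
  have hwin : ∀ j ≠ k, ∀ᶠ s in atTop, beats R s k j := fun j hjk =>
    ((hN_ex k j hjk.symm).eventually (i := 0) (by simpa using hk)).mono fun _ h => ⟨hjk.symm, h⟩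
  have hlose : ∀ j ≠ k, ∀ᶠ s in atTop, ¬ beats R s j k := fun j hjk =>
    ((hN_ex j k hjk).eventually (i := 1) (by simpa using hk)).mono fun _ h ⟨_, h'⟩ => by
      simp [h] at h'
  rw [infinite_vetoLearner_eq_some_iff hf hwin hlose]
  exact ⟨fun hj => hj ▸ hk, fun hj => by_contra fun hjk => hA j k hjk (hj.symm.trans hk)⟩

/-- A countable family of pairwise nonisomorphic structures is PL-learnable iff every
two-element subfamily `{A i, A j}` (`i ≠ j`) is Ex-learnable. -/
theorem plLearnable_iff_pairs_exLearnable {I : Type} [Countable I] (A : I → Struc)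
    (hA : ∀ i j, i ≠ j → ¬ Isom (A i) (A j)) :
    (∃ M : Struc → ℕ → Option I, IsLearner M ∧ PLLearns A M) ↔
      ∀ i j, i ≠ j →
        ∃ M : Struc → ℕ → Option (Fin 2), IsLearner M ∧
          ExLearns (fun t : Fin 2 => if t = 0 then A i else A j) M := by
  refine ⟨?_, exists_plLearns_of_pairs hA⟩
  rintro ⟨M, hM, hPL⟩ i j hij
  exact ⟨pairLearner M i j, hM.pairLearner i j, hPL.exLearns_pairLearner hA hij⟩
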